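/- arXiv:1202.2986 — 2 statements merged into one kernel-verified Lean document; each statement's English description precedes it below -/
import Mathlib

section
/- Let a ≥ 2 be an integer, and let G be the Grundy sequence of S({a, 2a + 1, 3a + 2}). Then: (i) G(n + 4a + 2) = G(n) for all n ∈ ℕ; (ii) for 0 ≤ n < 4a + 2: G(n) = 0 for 0 ≤ n < a; G(n) = 1 for a ≤ n < 2a; G(2a) = 0; G(n) = 2 for 2a + 1 ≤ n < 3a; G(3a) = 1; G(3a + 1) = 0; G(n) = 3 for 3a + 2 ≤ n < 4a; G(4a) = 2; and G(4a + 1) = 1; and (iii) for every c ≥ 1, G(n + c) ≠ G(n) holds for all n if and only if c = s + m(4a + 2) for some m ∈ ℕ and s ∈ {a, 2a + 1, 3a + 2} (the subtraction set is non-expandable). -/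
/-- The minimum excludant: the least natural number not in `X`. -/
noncomputable def mex (X : Set ℕ) : ℕ := sInf {m | m ∉ X}

/-- `G` is the Grundy (nim-value) sequence of the subtraction game with
subtraction set `S`: `G n = mex { G (n - s) : s ∈ S, s ≤ n }`. -/
def IsGrundy (S : Finset ℕ) (G : ℕ → ℕ) : Prop :=
  ∀ n, G n = mex {v | ∃ s ∈ S, s ≤ n ∧ v = G (n - s)}

lemma mex_eq {X : Set ℕ} {k : ℕ} (h1 : k ∉ X) (h2 : ∀ j < k, j ∈ X) : mex X = k := by
  have hne : {m | m ∉ X}.Nonempty := ⟨k, h1⟩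
  have hmem := Nat.sInf_mem hne
  refine le_antisymm (Nat.sInf_le h1) ?_
  by_contra hlt
  push_neg at hlt
  exact hmem (h2 _ hlt)

def pat (a r : ℕ) : ℕ :=
  if r < a then 0 else if r < 2*a then 1 else if r = 2*a then 0
  else if r < 3*a then 2 else if r = 3*a then 1 else if r = 3*a+1 then 0
  else if r < 4*a then 3 else if r = 4*a then 2 else 1

lemma pat_le (a r : ℕ) : pat a r ≤ 3 := by unfold pat; split_ifs <;> omega

lemma pat0 {a r : ℕ} (ha : 2 ≤ a) (h : r < a ∨ r = 2*a ∨ r = 3*a+1) : pat a r = 0 := by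
  unfold pat; split_ifs <;> omega

lemma pat1 {a r : ℕ} (ha : 2 ≤ a)
    (h : (a ≤ r ∧ r < 2*a) ∨ r = 3*a ∨ r = 4*a+1) : pat a r = 1 := by
  unfold pat; split_ifs <;> omega

lemma pat2 {a r : ℕ} (ha : 2 ≤ a)
    (h : (2*a+1 ≤ r ∧ r < 3*a) ∨ r = 4*a) : pat a r = 2 := by
  unfold pat; split_ifs <;> omega

lemma pat3 {a r : ℕ} (ha : 2 ≤ a) (h : 3*a+2 ≤ r ∧ r < 4*a) : pat a r = 3 := by
  unfold pat; split_ifs <;> omega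

lemma pat_ne0 {a r : ℕ} (ha : 2 ≤ a) (h : a ≤ r ∧ r ≠ 2*a ∧ r ≠ 3*a+1) :
    pat a r ≠ 0 := by
  unfold pat; split_ifs <;> omega

lemma pat_ne1 {a r : ℕ} (ha : 2 ≤ a)
    (h : r < a ∨ r = 2*a ∨ (2*a+1 ≤ r ∧ r < 3*a) ∨ r = 3*a+1 ∨ (3*a+2 ≤ r ∧ r ≤ 4*a)) :
    pat a r ≠ 1 := by
  unfold pat; split_ifs <;> omega

lemma pat_ne2 {a r : ℕ} (ha : 2 ≤ a)
    (h : r = 3*a+1 ∨ (3*a+2 ≤ r ∧ r < 4*a)) : pat a r ≠ 2 := by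
  unfold pat; split_ifs <;> omega

lemma sub_mod_key (n s p : ℕ) (hs : s ≤ n) (hsp : s ≤ p) :
    (n - s) % p = (n % p + (p - s)) % p := by
  have h1 : (n % p + (p - s)) % p = (n + (p - s)) % p :=
    Nat.ModEq.add_right (p - s) (Nat.mod_modEq n p)
  rw [h1, show n + (p - s) = (n - s) + p by omega, Nat.add_mod_right]

lemma sub_mod_hi (n s p : ℕ) (hp : 0 < p) (hs : s ≤ n) (hsp : s ≤ p) (h : s ≤ n % p) :
    (n - s) % p = n % p - s := by
  rw [sub_mod_key n s p hs hsp, show n % p + (p - s) = (n % p - s) + p by omega,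
    Nat.add_mod_right, Nat.mod_eq_of_lt (by have := Nat.mod_lt n hp; omega)]

lemma sub_mod_lo (n s p : ℕ) (hs : s ≤ n) (hsp : s ≤ p) (h : n % p < s) :
    (n - s) % p = n % p + p - s := by
  rw [sub_mod_key n s p hs hsp, Nat.mod_eq_of_lt (by omega)]
  omega

set_option maxHeartbeats 1000000 in
lemma grundy_pat (a : ℕ) (ha : 2 ≤ a) (G : ℕ → ℕ)
    (hG : IsGrundy {a, 2 * a + 1, 3 * a + 2} G) :
    ∀ n, G n = pat a (n % (4*a+2)) := by
  intro n
  induction n using Nat.strong_induction_on with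
  | _ n IH =>
  have hp : 0 < 4*a+2 := by omega
  have hr : n % (4*a+2) < 4*a+2 := Nat.mod_lt n hp
  rw [hG n]
  have hX : ∀ v, v ∈ {v | ∃ s ∈ ({a, 2*a+1, 3*a+2} : Finset ℕ), s ≤ n ∧ v = G (n - s)} ↔
      ((a ≤ n ∧ v = G (n - a)) ∨ (2*a+1 ≤ n ∧ v = G (n - (2*a+1))) ∨
        (3*a+2 ≤ n ∧ v = G (n - (3*a+2)))) := by
    intro v
    simp only [Set.mem_setOf_eq, Finset.mem_insert, Finset.mem_singleton]
    constructor
    · rintro ⟨s, (rfl | rfl | rfl), h1, h2⟩ <;> tauto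
    · rintro (⟨h1, h2⟩ | ⟨h1, h2⟩ | ⟨h1, h2⟩)
      exacts [⟨a, by tauto⟩, ⟨2*a+1, by tauto⟩, ⟨3*a+2, by tauto⟩]
  rcases (show n < a ∨ (a ≤ n ∧ n < 2*a) ∨ n = 2*a ∨ (2*a+1 ≤ n ∧ n < 3*a) ∨ n = 3*a ∨
      n = 3*a+1 ∨ 3*a+2 ≤ n by omega) with hn | hn | hn | hn | hn | hn | hn
  -- A1 : n < a
  · have hpr : pat a (n % (4*a+2)) = 0 := by
        rw [Nat.mod_eq_of_lt (show n < 4*a+2 by omega)]; exact pat0 ha (by omega)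
    rw [hpr]
    exact mex_eq (fun h => absurd ((hX _).mp h) (by omega)) (fun j hj => (hX j).mpr (by omega))
  -- A2 : a <= n < 2a
  · have v1 : G (n - a) = 0 := by
        rw [IH _ (by omega), Nat.mod_eq_of_lt (show n - a < 4*a+2 by omega)]
        exact pat0 ha (by omega)
    have hpr : pat a (n % (4*a+2)) = 1 := by
        rw [Nat.mod_eq_of_lt (show n < 4*a+2 by omega)]; exact pat1 ha (by omega)
    rw [hpr]
    exact mex_eq (fun h => absurd ((hX _).mp h) (by omega)) (fun j hj => (hX j).mpr (by omega))
  -- A2b : n = 2a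
  · have v1 : G (n - a) = 1 := by
        rw [IH _ (by omega), Nat.mod_eq_of_lt (show n - a < 4*a+2 by omega)]
        exact pat1 ha (by omega)
    have hpr : pat a (n % (4*a+2)) = 0 := by
        rw [Nat.mod_eq_of_lt (show n < 4*a+2 by omega)]; exact pat0 ha (by omega)
    rw [hpr]
    exact mex_eq (fun h => absurd ((hX _).mp h) (by omega)) (fun j hj => (hX j).mpr (by omega))
  -- A3a : 2a+1 <= n < 3a
  · have v1 : G (n - a) = 1 := by
        rw [IH _ (by omega), Nat.mod_eq_of_lt (show n - a < 4*a+2 by omega)]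
        exact pat1 ha (by omega)
    have v2 : G (n - (2*a+1)) = 0 := by
        rw [IH _ (by omega), Nat.mod_eq_of_lt (show n - (2*a+1) < 4*a+2 by omega)]
        exact pat0 ha (by omega)
    have hpr : pat a (n % (4*a+2)) = 2 := by
        rw [Nat.mod_eq_of_lt (show n < 4*a+2 by omega)]; exact pat2 ha (by omega)
    rw [hpr]
    exact mex_eq (fun h => absurd ((hX _).mp h) (by omega)) (fun j hj => (hX j).mpr (by omega))
  -- A3b : n = 3a
  · have v1 : G (n - a) = 0 := by
        rw [IH _ (by omega), Nat.mod_eq_of_lt (show n - a < 4*a+2 by omega)]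
        exact pat0 ha (by omega)
    have v2 : G (n - (2*a+1)) = 0 := by
        rw [IH _ (by omega), Nat.mod_eq_of_lt (show n - (2*a+1) < 4*a+2 by omega)]
        exact pat0 ha (by omega)
    have hpr : pat a (n % (4*a+2)) = 1 := by
        rw [Nat.mod_eq_of_lt (show n < 4*a+2 by omega)]; exact pat1 ha (by omega)
    rw [hpr]
    exact mex_eq (fun h => absurd ((hX _).mp h) (by omega)) (fun j hj => (hX j).mpr (by omega))
  -- A3c : n = 3a+1
  · have v1 : G (n - a) = 2 := by
        rw [IH _ (by omega), Nat.mod_eq_of_lt (show n - a < 4*a+2 by omega)]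
        exact pat2 ha (by omega)
    have v2 : G (n - (2*a+1)) = 1 := by
        rw [IH _ (by omega), Nat.mod_eq_of_lt (show n - (2*a+1) < 4*a+2 by omega)]
        exact pat1 ha (by omega)
    have hpr : pat a (n % (4*a+2)) = 0 := by
        rw [Nat.mod_eq_of_lt (show n < 4*a+2 by omega)]; exact pat0 ha (by omega)
    rw [hpr]
    exact mex_eq (fun h => absurd ((hX _).mp h) (by omega)) (fun j hj => (hX j).mpr (by omega))
  -- Regime B : n >= 3a+2
  · rcases (show n % (4*a+2) < a ∨ (a ≤ n % (4*a+2) ∧ n % (4*a+2) < 2*a) ∨ n % (4*a+2) = 2*a ∨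
        (2*a+1 ≤ n % (4*a+2) ∧ n % (4*a+2) < 3*a) ∨ n % (4*a+2) = 3*a ∨ n % (4*a+2) = 3*a+1 ∨
        (3*a+2 ≤ n % (4*a+2) ∧ n % (4*a+2) < 4*a) ∨ n % (4*a+2) = 4*a ∨ n % (4*a+2) = 4*a+1
        by omega) with hc | hc | hc | hc | hc | hc | hc | hc | hc
    -- B1 : r < a
    · have v1 : G (n - a) ≠ 0 := by
          rw [IH _ (by omega), sub_mod_lo n a (4*a+2) (by omega) (by omega) (by omega)]
          exact pat_ne0 ha (by omega)
      have v2 : G (n - (2*a+1)) ≠ 0 := by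
          rw [IH _ (by omega), sub_mod_lo n (2*a+1) (4*a+2) (by omega) (by omega) (by omega)]
          exact pat_ne0 ha (by omega)
      have v3 : G (n - (3*a+2)) ≠ 0 := by
          rw [IH _ (by omega), sub_mod_lo n (3*a+2) (4*a+2) (by omega) (by omega) (by omega)]
          exact pat_ne0 ha (by omega)
      have hpr : pat a (n % (4*a+2)) = 0 := pat0 ha (by omega)
      rw [hpr]
      exact mex_eq (fun h => absurd ((hX _).mp h) (by omega)) (fun j hj => (hX j).mpr (by omega))
    -- B2 : a <= r < 2a
    · have v1 : G (n - a) = 0 := by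
          rw [IH _ (by omega), sub_mod_hi n a (4*a+2) hp (by omega) (by omega) (by omega)]
          exact pat0 ha (by omega)
      have v2 : G (n - (2*a+1)) ≠ 1 := by
          rw [IH _ (by omega), sub_mod_lo n (2*a+1) (4*a+2) (by omega) (by omega) (by omega)]
          exact pat_ne1 ha (by omega)
      have v3 : G (n - (3*a+2)) ≠ 1 := by
          rw [IH _ (by omega), sub_mod_lo n (3*a+2) (4*a+2) (by omega) (by omega) (by omega)]
          exact pat_ne1 ha (by omega)
      have hpr : pat a (n % (4*a+2)) = 1 := pat1 ha (by omega)
      rw [hpr]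
      exact mex_eq (fun h => absurd ((hX _).mp h) (by omega)) (fun j hj => (hX j).mpr (by omega))
    -- B3 : r = 2a
    · have v1 : G (n - a) ≠ 0 := by
          rw [IH _ (by omega), sub_mod_hi n a (4*a+2) hp (by omega) (by omega) (by omega)]
          exact pat_ne0 ha (by omega)
      have v2 : G (n - (2*a+1)) ≠ 0 := by
          rw [IH _ (by omega), sub_mod_lo n (2*a+1) (4*a+2) (by omega) (by omega) (by omega)]
          exact pat_ne0 ha (by omega)
      have v3 : G (n - (3*a+2)) ≠ 0 := by
          rw [IH _ (by omega), sub_mod_lo n (3*a+2) (4*a+2) (by omega) (by omega) (by omega)]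
          exact pat_ne0 ha (by omega)
      have hpr : pat a (n % (4*a+2)) = 0 := pat0 ha (by omega)
      rw [hpr]
      exact mex_eq (fun h => absurd ((hX _).mp h) (by omega)) (fun j hj => (hX j).mpr (by omega))
    -- B4 : 2a+1 <= r < 3a
    · have v1 : G (n - a) = 1 := by
          rw [IH _ (by omega), sub_mod_hi n a (4*a+2) hp (by omega) (by omega) (by omega)]
          exact pat1 ha (by omega)
      have v2 : G (n - (2*a+1)) = 0 := by
          rw [IH _ (by omega), sub_mod_hi n (2*a+1) (4*a+2) hp (by omega) (by omega) (by omega)]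
          exact pat0 ha (by omega)
      have v3 : G (n - (3*a+2)) ≠ 2 := by
          rw [IH _ (by omega), sub_mod_lo n (3*a+2) (4*a+2) (by omega) (by omega) (by omega)]
          exact pat_ne2 ha (by omega)
      have hpr : pat a (n % (4*a+2)) = 2 := pat2 ha (by omega)
      rw [hpr]
      exact mex_eq (fun h => absurd ((hX _).mp h) (by omega)) (fun j hj => (hX j).mpr (by omega))
    -- B5 : r = 3a
    · have v1 : G (n - a) = 0 := by
          rw [IH _ (by omega), sub_mod_hi n a (4*a+2) hp (by omega) (by omega) (by omega)]
          exact pat0 ha (by omega)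
      have v2 : G (n - (2*a+1)) = 0 := by
          rw [IH _ (by omega), sub_mod_hi n (2*a+1) (4*a+2) hp (by omega) (by omega) (by omega)]
          exact pat0 ha (by omega)
      have v3 : G (n - (3*a+2)) ≠ 1 := by
          rw [IH _ (by omega), sub_mod_lo n (3*a+2) (4*a+2) (by omega) (by omega) (by omega)]
          exact pat_ne1 ha (by omega)
      have hpr : pat a (n % (4*a+2)) = 1 := pat1 ha (by omega)
      rw [hpr]
      exact mex_eq (fun h => absurd ((hX _).mp h) (by omega)) (fun j hj => (hX j).mpr (by omega))
    -- B6 : r = 3a+1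
    · have v1 : G (n - a) ≠ 0 := by
          rw [IH _ (by omega), sub_mod_hi n a (4*a+2) hp (by omega) (by omega) (by omega)]
          exact pat_ne0 ha (by omega)
      have v2 : G (n - (2*a+1)) ≠ 0 := by
          rw [IH _ (by omega), sub_mod_hi n (2*a+1) (4*a+2) hp (by omega) (by omega) (by omega)]
          exact pat_ne0 ha (by omega)
      have v3 : G (n - (3*a+2)) ≠ 0 := by
          rw [IH _ (by omega), sub_mod_lo n (3*a+2) (4*a+2) (by omega) (by omega) (by omega)]
          exact pat_ne0 ha (by omega)
      have hpr : pat a (n % (4*a+2)) = 0 := pat0 ha (by omega)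
      rw [hpr]
      exact mex_eq (fun h => absurd ((hX _).mp h) (by omega)) (fun j hj => (hX j).mpr (by omega))
    -- B7 : 3a+2 <= r < 4a
    · have v1 : G (n - a) = 2 := by
          rw [IH _ (by omega), sub_mod_hi n a (4*a+2) hp (by omega) (by omega) (by omega)]
          exact pat2 ha (by omega)
      have v2 : G (n - (2*a+1)) = 1 := by
          rw [IH _ (by omega), sub_mod_hi n (2*a+1) (4*a+2) hp (by omega) (by omega) (by omega)]
          exact pat1 ha (by omega)
      have v3 : G (n - (3*a+2)) = 0 := by
          rw [IH _ (by omega), sub_mod_hi n (3*a+2) (4*a+2) hp (by omega) (by omega) (by omega)]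
          exact pat0 ha (by omega)
      have hpr : pat a (n % (4*a+2)) = 3 := pat3 ha (by omega)
      rw [hpr]
      exact mex_eq (fun h => absurd ((hX _).mp h) (by omega)) (fun j hj => (hX j).mpr (by omega))
    -- B8 : r = 4a
    · have v1 : G (n - a) = 1 := by
          rw [IH _ (by omega), sub_mod_hi n a (4*a+2) hp (by omega) (by omega) (by omega)]
          exact pat1 ha (by omega)
      have v2 : G (n - (2*a+1)) = 1 := by
          rw [IH _ (by omega), sub_mod_hi n (2*a+1) (4*a+2) hp (by omega) (by omega) (by omega)]
          exact pat1 ha (by omega)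
      have v3 : G (n - (3*a+2)) = 0 := by
          rw [IH _ (by omega), sub_mod_hi n (3*a+2) (4*a+2) hp (by omega) (by omega) (by omega)]
          exact pat0 ha (by omega)
      have hpr : pat a (n % (4*a+2)) = 2 := pat2 ha (by omega)
      rw [hpr]
      exact mex_eq (fun h => absurd ((hX _).mp h) (by omega)) (fun j hj => (hX j).mpr (by omega))
    -- B9 : r = 4a+1
    · have v1 : G (n - a) = 0 := by
          rw [IH _ (by omega), sub_mod_hi n a (4*a+2) hp (by omega) (by omega) (by omega)]
          exact pat0 ha (by omega)
      have v2 : G (n - (2*a+1)) = 0 := by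
          rw [IH _ (by omega), sub_mod_hi n (2*a+1) (4*a+2) hp (by omega) (by omega) (by omega)]
          exact pat0 ha (by omega)
      have v3 : G (n - (3*a+2)) = 0 := by
          rw [IH _ (by omega), sub_mod_hi n (3*a+2) (4*a+2) hp (by omega) (by omega) (by omega)]
          exact pat0 ha (by omega)
      have hpr : pat a (n % (4*a+2)) = 1 := pat1 ha (by omega)
      rw [hpr]
      exact mex_eq (fun h => absurd ((hX _).mp h) (by omega)) (fun j hj => (hX j).mpr (by omega))

set_option maxHeartbeats 1000000 in
theorem stmt_14 (a : ℕ) (ha : 2 ≤ a) (G : ℕ → ℕ)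
    (hG : IsGrundy {a, 2 * a + 1, 3 * a + 2} G) :
    (∀ n, G (n + (4 * a + 2)) = G n) ∧
    (∀ n < 4 * a + 2,
      (n < a → G n = 0) ∧
      (a ≤ n → n < 2 * a → G n = 1) ∧
      (n = 2 * a → G n = 0) ∧
      (2 * a + 1 ≤ n → n < 3 * a → G n = 2) ∧
      (n = 3 * a → G n = 1) ∧
      (n = 3 * a + 1 → G n = 0) ∧
      (3 * a + 2 ≤ n → n < 4 * a → G n = 3) ∧
      (n = 4 * a → G n = 2) ∧
      (n = 4 * a + 1 → G n = 1)) ∧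
    (∀ c, 1 ≤ c →
      ((∀ n, G (n + c) ≠ G n) ↔
        ∃ s m : ℕ, c = s + m * (4 * a + 2) ∧
          (s = a ∨ s = 2 * a + 1 ∨ s = 3 * a + 2))) := by
  have Geq : ∀ n, G n = pat a (n % (4*a+2)) := grundy_pat a ha G hG
  refine ⟨?_, ?_, ?_⟩
  · intro n
    rw [Geq, Geq, Nat.add_mod_right]
  · intro n hn
    have hh : n % (4*a+2) = n := Nat.mod_eq_of_lt hn
    refine ⟨?_, ?_, ?_, ?_, ?_, ?_, ?_, ?_, ?_⟩ <;>
      · intros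
        rw [Geq n, hh]
        unfold pat; split_ifs <;> omega
  · intro c hc
    constructor
    · intro h
      refine ⟨c % (4*a+2), c / (4*a+2), (Nat.mod_add_div' c (4*a+2)).symm, ?_⟩
      by_contra hs
      push_neg at hs
      obtain ⟨hs1, hs2, hs3⟩ := hs
      have hrp : c % (4*a+2) < 4*a+2 := Nat.mod_lt c (by omega)
      have key : ∀ x, G (x + c) = pat a ((x + c % (4*a+2)) % (4*a+2)) := by
        intro x
        rw [Geq]
        congr 1
        conv_lhs => rw [← Nat.mod_add_div c (4*a+2), ← Nat.add_assoc]
        rw [Nat.add_mul_mod_self_left]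
      rcases (show (c % (4*a+2) < a ∨ c % (4*a+2) = 2*a ∨ c % (4*a+2) = 3*a+1) ∨
          (a+1 ≤ c % (4*a+2) ∧ c % (4*a+2) ≤ 2*a) ∨
          (2*a+2 ≤ c % (4*a+2) ∧ c % (4*a+2) ≤ 3*a+1) ∨
          (3*a+3 ≤ c % (4*a+2) ∧ c % (4*a+2) ≤ 4*a+1) by omega)
        with hcase | hcase | hcase | hcase
      · refine h 0 ?_
        rw [key 0, Geq 0, Nat.zero_add, Nat.zero_mod, Nat.mod_eq_of_lt hrp,
          pat0 ha hcase, pat0 ha (by omega)]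
      · refine h (2*a - c % (4*a+2)) ?_
        rw [key _, Geq _, show 2*a - c % (4*a+2) + c % (4*a+2) = 2*a by omega,
          Nat.mod_eq_of_lt (show 2*a < 4*a+2 by omega),
          Nat.mod_eq_of_lt (show 2*a - c % (4*a+2) < 4*a+2 by omega),
          pat0 ha (by omega), pat0 ha (by omega)]
      · refine h (3*a+1 - c % (4*a+2)) ?_
        rw [key _, Geq _, show 3*a+1 - c % (4*a+2) + c % (4*a+2) = 3*a+1 by omega,
          Nat.mod_eq_of_lt (show 3*a+1 < 4*a+2 by omega),
          Nat.mod_eq_of_lt (show 3*a+1 - c % (4*a+2) < 4*a+2 by omega),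
          pat0 ha (by omega), pat0 ha (by omega)]
      · refine h (4*a+2 - c % (4*a+2)) ?_
        rw [key _, Geq _, show 4*a+2 - c % (4*a+2) + c % (4*a+2) = 4*a+2 by omega,
          Nat.mod_self,
          Nat.mod_eq_of_lt (show 4*a+2 - c % (4*a+2) < 4*a+2 by omega),
          pat0 ha (by omega), pat0 ha (by omega)]
    · rintro ⟨s, m, rfl, hs⟩
      intro n
      have e2 : G (n + (s + m * (4*a+2))) = G (n + s) := by
        rw [Geq, Geq, ← Nat.add_assoc, Nat.add_mul_mod_self_right]
      have h1 : G n ∈ {v | ∃ t ∈ ({a, 2*a+1, 3*a+2} : Finset ℕ), t ≤ n + s ∧ v = G (n + s - t)} :=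
        ⟨s, by rcases hs with rfl | rfl | rfl <;> simp, by omega, by rw [Nat.add_sub_cancel]⟩
      have h2 : G (n + s) ∉
          {v | ∃ t ∈ ({a, 2*a+1, 3*a+2} : Finset ℕ), t ≤ n + s ∧ v = G (n + s - t)} := by
        rw [hG (n + s)]
        have hne : {m | m ∉ {v | ∃ t ∈ ({a, 2*a+1, 3*a+2} : Finset ℕ),
            t ≤ n + s ∧ v = G (n + s - t)}}.Nonempty := by
          refine ⟨4, ?_⟩
          rintro ⟨t, ht, ht2, ht3⟩
          rw [Geq] at ht3
          have := pat_le a ((n + s - t) % (4*a+2))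
          omega
        exact Nat.sInf_mem hne
      intro heq
      have : G (n + s) = G n := by rw [← e2]; exact heq
      exact h2 (by rw [this]; exact h1)
end

section
/- Let S be a finite nonempty set of positive integers with Grundy sequence G, and suppose the game is ultimately bipartite, i.e., there exist M and ε ∈ {0, 1} with G(n) = (n + ε) mod 2 for all n ≥ M. Let n₀ be the least natural number N such that G(n + 2) = G(n) for all n ≥ N (the pre-period). If n₀ > 0, then n₀ ≥ min S + max S. -/
lemma mex_not_mem {X : Set ℕ} (h : X.Finite) : mex X ∉ X :=
  Nat.sInf_mem (h.infinite_compl.nonempty)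

lemma mem_of_lt_mex {X : Set ℕ} {w : ℕ} (hw : w < mex X) : w ∈ X := by
  by_contra h
  have := Nat.sInf_le (show w ∈ {m | m ∉ X} from h)
  unfold mex at hw
  omega

lemma mex_empty : mex (∅ : Set ℕ) = 0 := by
  unfold mex
  have h : {m : ℕ | m ∉ (∅ : Set ℕ)} = Set.univ := by ext; simp
  rw [h]
  exact Nat.sInf_eq_zero.mpr (Or.inl (Set.mem_univ 0))

theorem stmt_17 (S : Finset ℕ) (hS : S.Nonempty) (hpos : ∀ s ∈ S, 0 < s)
    (G : ℕ → ℕ) (hG : IsGrundy S G)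
    (hbip : ∃ M ε : ℕ, ε ≤ 1 ∧ ∀ n, M ≤ n → G n = (n + ε) % 2)
    (n₀ : ℕ) (hn₀ : IsLeast {N : ℕ | ∀ n, N ≤ n → G (n + 2) = G n} n₀)
    (hn₀pos : 0 < n₀) :
    S.min' hS + S.max' hS ≤ n₀ := by
  obtain ⟨M, ε, hε, hM⟩ := hbip
  set a := S.min' hS with ha_def
  set b := S.max' hS with hb_def
  have haS : a ∈ S := S.min'_mem hS
  have hbS : b ∈ S := S.max'_mem hS
  have hab : a ≤ b := S.min'_le b hbS
  have hapos : 0 < a := hpos a haS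
  have hbpos : 0 < b := hpos b hbS
  set m := n₀ - 1 with hm_def
  -- finiteness of the option sets
  have hfin : ∀ n : ℕ, {v : ℕ | ∃ s ∈ S, s ≤ n ∧ v = G (n - s)}.Finite := by
    intro n
    apply Set.Finite.subset (S.finite_toSet.image (fun s => G (n - s)))
    rintro v ⟨s, hs, -, rfl⟩
    exact ⟨s, hs, rfl⟩
  have hnotm : ∀ n : ℕ, G n ∉ {v : ℕ | ∃ s ∈ S, s ≤ n ∧ v = G (n - s)} := by
    intro n
    rw [hG n]
    exact mex_not_mem (hfin n)
  have hlt : ∀ n w : ℕ, w < G n → ∃ s ∈ S, s ≤ n ∧ w = G (n - s) := by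
    intro n w hw
    exact mem_of_lt_mex (by rw [← hG n]; exact hw)
  -- positions below a have Grundy value 0
  have hlow : ∀ n : ℕ, n < a → G n = 0 := by
    intro n hn
    have hXe : {v : ℕ | ∃ s ∈ S, s ≤ n ∧ v = G (n - s)} = ∅ := by
      ext v
      constructor
      · rintro ⟨s, hs, hsn, -⟩
        have := S.min'_le s hs
        exact absurd this (by omega)
      · intro h; exact h.elim
    rw [hG n, hXe, mex_empty]
  -- periodicity from n₀ on
  have hper : ∀ n, n₀ ≤ n → G (n + 2) = G n := hn₀.1
  -- correctness above m
  have hcor : ∀ N, m < N → G N = (N + ε) % 2 := by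
    intro N hN
    have key : ∀ k, G N = G (N + 2 * k) := by
      intro k
      induction k with
      | zero => simp
      | succ k ih =>
        rw [ih, show N + 2 * (k + 1) = N + 2 * k + 2 by ring,
          hper (N + 2 * k) (by omega)]
    rw [key M, hM (N + 2 * M) (by omega)]
    omega
  -- all elements of S are odd
  have hodd : ∀ s ∈ S, s % 2 = 1 := by
    intro s hs
    have hsp := hpos s hs
    have hG0 : G (2 * M + 2 * s + ε) = 0 := by
      rw [hM (2 * M + 2 * s + ε) (by omega)]; omega
    have hGs : G (2 * M + 2 * s + ε - s) ≠ 0 := by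
      intro h
      apply hnotm (2 * M + 2 * s + ε)
      rw [hG0]
      exact ⟨s, hs, by omega, h.symm⟩
    rw [hM (2 * M + 2 * s + ε - s) (by omega)] at hGs
    omega
  have haodd := hodd a haS
  have hbodd := hodd b hbS
  -- m is an "incorrect" position
  have hmI : G m ≠ (m + ε) % 2 := by
    have hm2 := hcor (m + 2) (by omega)
    have hnotin : ¬ ∀ n, m ≤ n → G (n + 2) = G n := by
      intro hin
      have := hn₀.2 hin
      omega
    push_neg at hnotin
    obtain ⟨n, hn1, hn2⟩ := hnotin
    have hnm : n = m := by
      by_contra hne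
      exact hn2 (hper n (by omega))
    subst hnm
    intro hEq
    apply hn2
    rw [hm2, hEq]
    omega
  -- the star lemma: no position n with n + b > m can carry the value (n+1+ε) % 2
  have hstar : ∀ n, m < n + b → G n ≠ (n + 1 + ε) % 2 := by
    intro n hn hEq
    have hGN := hcor (n + b) hn
    apply hnotm (n + b)
    have h2 : G (n + b) = G n := by rw [hGN, hEq]; omega
    rw [h2]
    exact ⟨b, hbS, by omega, by rw [Nat.add_sub_cancel]⟩
  -- G m ≥ 2
  have hGm1 : G m ≠ (m + 1 + ε) % 2 := hstar m (by omega)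
  have hGm2 : 2 ≤ G m := by omega
  rcases Nat.mod_two_eq_zero_or_one (m + ε) with hr | hr
  · -- case (m+ε) % 2 = 0 : use the 0-witness
    obtain ⟨s, hsS, hsm, hsv⟩ := hlt m 0 (by omega)
    have hso := hodd s hsS
    have hsb : s = b := by
      by_contra hne
      have hslt : s < b := lt_of_le_of_ne (S.le_max' s hsS) hne
      exact hstar (m - s) (by omega) (by rw [← hsv]; omega)
    subst hsb
    by_cases hk : a ≤ m - b
    · omega
    · exfalso
      set P := m - b + a with hP_def
      have hG0P : G P ≠ 0 := by
        intro h
        apply hnotm P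
        rw [h]
        exact ⟨a, haS, by omega, by rw [show P - a = m - b by omega]; exact hsv⟩
      have hGP1 : G P ≠ 1 := by
        intro h1
        exact hstar P (by omega) (by rw [h1]; omega)
      obtain ⟨u, huS, huP, huv⟩ := hlt P 1 (by omega)
      have hua := S.min'_le u huS
      have hl := hlow (P - u) (by omega)
      omega
  · -- case (m+ε) % 2 = 1 : use the 1-witness
    obtain ⟨s, hsS, hsm, hsv⟩ := hlt m 1 (by omega)
    have hso := hodd s hsS
    have hsb : s = b := by
      by_contra hne
      have hslt : s < b := lt_of_le_of_ne (S.le_max' s hsS) hne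
      exact hstar (m - s) (by omega) (by rw [← hsv]; omega)
    subst hsb
    obtain ⟨t, htS, htb, -⟩ := hlt (m - b) 0 (by rw [← hsv]; omega)
    have := S.min'_le t htS
    omega
end
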